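/- arXiv:1604.03042 — 3 statements merged into one kernel-verified Lean document; each statement's English description precedes it below -/
import Mathlib

section
/- There exists an 𝔽-stopping time τ, finite-valued almost surely, whose law (the pushforward of ℙ under τ) equals μ = Σ_{k=1}^r p_k δ_{t_k}. -/
open MeasureTheory ProbabilityTheory Set

noncomputable section

/-! Sample the Brownian motion once, at the first atom `t 1 > 0`. The increment
`X = W (t 1) - W 0` is a non-degenerate Gaussian, so its cdf is continuous and takes the values
`c k = p 1 + ⋯ + p k` (`0 < k < r`) at points `a 1 < ⋯ < a (r - 1)`. Then `τ := t k` on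
`{a (k - 1) < X ≤ a k}` (with `a 0 = -∞`, `a r = ∞`) has
`P (τ = t k) = c k - c (k - 1) = p k`, and `τ` is a stopping time because it is a function of the
`ℱ (t 1)`-measurable variable `X` and never takes a value below `t 1`. -/

/-- The atomic measure `∑_{k=1}^r p_k δ_{t_k}` on `ℝ`. -/
def atomicLaw (r : ℕ) (t p : ℕ → ℝ) : Measure ℝ :=
  ∑ k ∈ Finset.Icc 1 r, ENNReal.ofReal (p k) • Measure.dirac (t k)

section

variable {ν : Measure ℝ} [IsProbabilityMeasure ν] [NullSingletonClass ν]

lemma continuous_cdf_of_nullSingletonClass : Continuous (cdf ν) := by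
  refine continuous_iff_continuousAt.2 fun x => ?_
  have hleft : Function.leftLim (cdf ν) x = cdf ν x := by
    have h := (cdf ν).measure_singleton x
    rw [measure_cdf, measure_singleton, eq_comm, ENNReal.ofReal_eq_zero, sub_nonpos] at h
    exact le_antisymm ((monotone_cdf ν).leftLim_le le_rfl) h
  rw [continuousAt_iff_continuous_left_right, ← continuousWithinAt_Iio_iff_Iic,
    (monotone_cdf ν).continuousWithinAt_Iio_iff_leftLim_eq]
  exact ⟨hleft, (cdf ν).right_continuous x⟩

lemma Ioo_subset_range_cdf : Ioo 0 1 ⊆ range (cdf ν) := fun _ hq =>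
  mem_range_of_exists_le_of_exists_ge continuous_cdf_of_nullSingletonClass
    (((tendsto_cdf_atBot ν).eventually_lt_const hq.1).exists.imp fun _ => le_of_lt)
    (((tendsto_cdf_atTop ν).eventually_const_lt hq.2).exists.imp fun _ => le_of_lt)

end

lemma Monotone.strictMonoOn_invFun {α β : Type*} [Nonempty α] [LinearOrder α] [Preorder β]
    {f : α → β} (hf : Monotone f) : StrictMonoOn (Function.invFun f) (range f) := by
  rintro _ ⟨a, rfl⟩ _ ⟨b, rfl⟩ hab
  by_contra! h
  have := hf h
  rw [Function.invFun_eq (f := f) ⟨a, rfl⟩, Function.invFun_eq (f := f) ⟨b, rfl⟩] at this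
  exact this.not_gt hab

lemma strictMonoOn_sum_Icc_one {p : ℕ → ℝ} {r : ℕ}
    (hp : ∀ k ∈ Finset.Icc 1 r, 0 < p k) :
    StrictMonoOn (fun k => ∑ j ∈ Finset.Icc 1 k, p j) (Iic r) :=
  strictMonoOn_Iic_of_lt_succ fun k hk => by
    rw [Order.succ_eq_add_one, Finset.sum_Icc_succ_top (by omega)]
    exact lt_add_of_pos_right _ (hp _ (Finset.mem_Icc.2 ⟨by omega, hk⟩))

lemma measure_preimage_singleton_succ {α : Type*} [MeasurableSpace α] {μ : Measure α}
    [IsFiniteMeasure μ] {g : α → ℕ} (hg : Measurable g) (k : ℕ) :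
    μ (g ⁻¹' {k + 1}) = μ {x | g x ≤ k + 1} - μ {x | g x ≤ k} := by
  have hdiff : g ⁻¹' {k + 1} = {x | g x ≤ k + 1} \ {x | g x ≤ k} := by
    ext x
    simp only [mem_preimage, mem_singleton_iff, mem_sdiff, mem_ofPred_eq]
    omega
  have hsub : {x | g x ≤ k} ⊆ {x | g x ≤ k + 1} := fun x hx => Nat.le_succ_of_le hx
  rw [hdiff, measure_sdiff hsub (hg measurableSet_Iic).nullMeasurableSet (measure_ne_top μ _)]

def thresholdRank (a : ℕ → ℝ) (r : ℕ) (x : ℝ) : ℕ :=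
  1 + ((Finset.Ico 1 r).filter (a · < x)).card

section

variable {a : ℕ → ℝ} {r : ℕ}

lemma one_le_thresholdRank (x : ℝ) : 1 ≤ thresholdRank a r x := Nat.le_add_right 1 _

lemma thresholdRank_le (hr : 1 ≤ r) (x : ℝ) : thresholdRank a r x ≤ r := by
  have := (Finset.card_filter_le (Finset.Ico 1 r) (a · < x)).trans (Nat.card_Ico 1 r).le
  unfold thresholdRank
  omega

lemma thresholdRank_le_iff (ha : MonotoneOn a (Ico 1 r)) {k : ℕ} (hk : k ∈ Ico 1 r) (x : ℝ) :
    thresholdRank a r x ≤ k ↔ x ≤ a k := by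
  obtain ⟨hk1, hkr⟩ := hk
  constructor
  · intro h
    by_contra! hx
    have hsub : Finset.Icc 1 k ⊆ (Finset.Ico 1 r).filter (a · < x) := fun j hj => by
      obtain ⟨hj1, hjk⟩ := Finset.mem_Icc.1 hj
      exact Finset.mem_filter.2 ⟨Finset.mem_Ico.2 ⟨hj1, by omega⟩,
        (ha ⟨hj1, by omega⟩ ⟨hk1, hkr⟩ hjk).trans_lt hx⟩
    have := Finset.card_le_card hsub
    rw [Nat.card_Icc] at this
    unfold thresholdRank at h
    omega
  · intro hx
    have hsub : (Finset.Ico 1 r).filter (a · < x) ⊆ Finset.Ico 1 k := fun j hj => by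
      obtain ⟨hj, hjx⟩ := Finset.mem_filter.1 hj
      obtain ⟨hj1, hjr⟩ := Finset.mem_Ico.1 hj
      refine Finset.mem_Ico.2 ⟨hj1, ?_⟩
      by_contra! hkj
      exact (hjx.trans_le hx).not_ge (ha ⟨hk1, hkr⟩ ⟨hj1, hjr⟩ hkj)
    have := Finset.card_le_card hsub
    rw [Nat.card_Ico] at this
    unfold thresholdRank
    omega

lemma measurable_thresholdRank : Measurable (thresholdRank a r) := by
  unfold thresholdRank
  simp_rw [Finset.card_filter]
  exact measurable_const.add <| Finset.measurable_sum _ fun j _ =>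
    Measurable.ite measurableSet_Ioi measurable_const measurable_const

lemma measure_thresholdRank_le {ν : Measure ℝ} [IsProbabilityMeasure ν] {c : ℕ → ℝ}
    (ha : MonotoneOn a (Ico 1 r)) (hac : ∀ k ∈ Ico 1 r, cdf ν (a k) = c k) (hc0 : c 0 = 0)
    (hcr : c r = 1) {k : ℕ} (hk : k ≤ r) :
    ν {x | thresholdRank a r x ≤ k} = ENNReal.ofReal (c k) := by
  rcases Nat.eq_zero_or_pos k with rfl | hk1
  · have hempty : {x | thresholdRank a r x ≤ 0} = ∅ :=
      eq_empty_of_forall_notMem fun x (hx : thresholdRank a r x ≤ 0) =>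
        (one_le_thresholdRank (a := a) (r := r) x).not_gt (by omega)
    rw [hempty, measure_empty, hc0, ENNReal.ofReal_zero]
  rcases hk.lt_or_eq with hkr | rfl
  · have hIic : {x | thresholdRank a r x ≤ k} = Iic (a k) :=
      ext fun x => thresholdRank_le_iff ha ⟨hk1, hkr⟩ x
    rw [hIic, ← ofReal_cdf, hac k ⟨hk1, hkr⟩]
  · have huniv : {x | thresholdRank a k x ≤ k} = univ := eq_univ_of_forall (thresholdRank_le hk1)
    rw [huniv, measure_univ, hcr, ENNReal.ofReal_one]

end

theorem exists_measurable_index_measure_preimage_eq (ν : Measure ℝ) [IsProbabilityMeasure ν]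
    [NullSingletonClass ν] {r : ℕ} {p : ℕ → ℝ} (hp : ∀ k ∈ Finset.Icc 1 r, 0 < p k)
    (hpsum : ∑ k ∈ Finset.Icc 1 r, p k = 1) :
    ∃ g : ℝ → ℕ, Measurable g ∧ (∀ x, g x ∈ Finset.Icc 1 r) ∧
      ∀ k ∈ Finset.Icc 1 r, ν (g ⁻¹' {k}) = ENNReal.ofReal (p k) := by
  set c : ℕ → ℝ := fun k => ∑ j ∈ Finset.Icc 1 k, p j
  have hr : 1 ≤ r := Nat.one_le_iff_ne_zero.2 fun h => by simp [h] at hpsum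
  have hc_mono : StrictMonoOn c (Iic r) := strictMonoOn_sum_Icc_one hp
  have hc0 : c 0 = 0 := by simp [c]
  have hc_mem : ∀ k ∈ Ico 1 r, c k ∈ Ioo 0 1 := fun k hk =>
    ⟨hc0 ▸ hc_mono (Nat.zero_le r) hk.2.le hk.1,
      hpsum ▸ hc_mono hk.2.le (mem_Iic.2 le_rfl) hk.2⟩
  set a := Function.invFun (cdf ν) ∘ c
  have hac : ∀ k ∈ Ico 1 r, cdf ν (a k) = c k := fun k hk =>
    Function.invFun_eq (Ioo_subset_range_cdf (hc_mem k hk))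
  have ha : MonotoneOn a (Ico 1 r) :=
    (monotone_cdf ν).strictMonoOn_invFun.monotoneOn.comp
      (hc_mono.mono fun _ hk => hk.2.le).monotoneOn fun k hk => Ioo_subset_range_cdf (hc_mem k hk)
  refine ⟨thresholdRank a r, measurable_thresholdRank,
    fun x => Finset.mem_Icc.2 ⟨one_le_thresholdRank x, thresholdRank_le hr x⟩, fun k hk => ?_⟩
  obtain ⟨hk1, hkr⟩ := Finset.mem_Icc.1 hk
  obtain ⟨k, rfl⟩ := Nat.exists_eq_add_of_le' hk1
  have hck : 0 ≤ c k :=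
    hc0 ▸ hc_mono.monotoneOn (Nat.zero_le r) (by omega : k ≤ r) (Nat.zero_le k)
  have hstep : c (k + 1) = c k + p (k + 1) := Finset.sum_Icc_succ_top (by omega) p
  rw [measure_preimage_singleton_succ measurable_thresholdRank,
    measure_thresholdRank_le ha hac hc0 hpsum hkr,
    measure_thresholdRank_le ha hac hc0 hpsum (by omega), ← ENNReal.ofReal_sub _ hck, hstep,
    add_sub_cancel_left]

lemma map_comp_eq_atomicLaw {α : Type*} [MeasurableSpace α] {μ : Measure α} {g : α → ℕ}
    (hg : Measurable g) {r : ℕ} (hgr : ∀ x, g x ∈ Finset.Icc 1 r) {p : ℕ → ℝ}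
    (hμg : ∀ k ∈ Finset.Icc 1 r, μ (g ⁻¹' {k}) = ENNReal.ofReal (p k)) (t : ℕ → ℝ) :
    μ.map (t ∘ g) = atomicLaw r t p := by
  have hmap : μ.map g = ∑ k ∈ Finset.Icc 1 r, ENNReal.ofReal (p k) • Measure.dirac k := by
    refine Measure.ext_of_singleton fun k => ?_
    rw [Measure.map_apply hg (measurableSet_singleton k)]
    by_cases hk : k ∈ Finset.Icc 1 r
    · simp [hμg k hk, hk, Pi.single_apply]
    · have : g ⁻¹' {k} = ∅ := eq_empty_of_forall_notMem fun x hx => hk (hx ▸ hgr x)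
      simp [this, hk, Pi.single_apply]
  rw [← Measure.map_map measurable_from_nat hg, hmap,
    Measure.map_finset_sum measurable_from_nat.aemeasurable, atomicLaw]
  simp_rw [Measure.map_smul, Measure.map_dirac' measurable_from_nat]

lemma isStoppingTime_coe_of_measurable_of_le {Ω ι : Type*} {m : MeasurableSpace Ω}
    [LinearOrder ι] [TopologicalSpace ι] [ClosedIicTopology ι] [MeasurableSpace ι]
    [OpensMeasurableSpace ι] {ℱ : Filtration ι m} {τ : Ω → ι} {i : ι}
    (hτ : Measurable[ℱ i] τ) (hle : ∀ ω, i ≤ τ ω) :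
    IsStoppingTime ℱ (fun ω => (τ ω : WithTop ι)) := by
  intro j
  simp only [WithTop.coe_le_coe]
  by_cases hij : i ≤ j
  · exact ℱ.mono hij _ (hτ measurableSet_Iic)
  · convert @MeasurableSet.empty _ (ℱ j)
    exact eq_empty_of_forall_notMem fun ω hω => hij ((hle ω).trans hω)

theorem exists_stopping_time_with_atomic_law_general
    {Ω : Type*} {m : MeasurableSpace Ω} (P : Measure Ω) [IsProbabilityMeasure P]
    (W : ℝ → Ω → ℝ) (ℱ : Filtration ℝ m)
    -- `W` is a standard Brownian motion:
    (hWlaw : ∀ s u : ℝ, 0 ≤ s → s ≤ u →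
      Measure.map (fun ω => W u ω - W s ω) P = gaussianReal 0 (Real.toNNReal (u - s)))
    -- `ℱ` is the natural filtration of `W` augmented by the `P`-null sets:
    (hWadapted : ∀ s : ℝ, 0 ≤ s → StronglyMeasurable[ℱ s] (W s))
    -- times and weights:
    (r : ℕ) (hr : 1 ≤ r) (t : ℕ → ℝ) (ht0 : t 0 = 0)
    (htmono : ∀ k, k < r → t k < t (k + 1))
    (p : ℕ → ℝ) (hp : ∀ k ∈ Finset.Icc 1 r, 0 < p k)
    (hpsum : ∑ k ∈ Finset.Icc 1 r, p k = 1) :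
    ∃ τ : Ω → ℝ, IsStoppingTime ℱ (fun ω => (τ ω : WithTop ℝ)) ∧ Measure.map τ P = atomicLaw r t p := by
  have ht1 : 0 < t 1 := ht0 ▸ htmono 0 hr
  set X : Ω → ℝ := fun ω => W (t 1) ω - W 0 ω
  have hX : Measurable[ℱ (t 1)] X := (hWadapted _ ht1.le).measurable.sub
    ((hWadapted 0 le_rfl).measurable.mono (ℱ.mono ht1.le) le_rfl)
  have hXm : Measurable X := hX.mono (ℱ.le _) le_rfl
  have hlaw : P.map X = gaussianReal 0 (t 1).toNNReal := by simpa using hWlaw 0 (t 1) le_rfl ht1.le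
  have : IsProbabilityMeasure (P.map X) := Measure.isProbabilityMeasure_map hXm.aemeasurable
  have : NullSingletonClass (P.map X) :=
    hlaw ▸ nullSingletonClass_gaussianReal (Real.toNNReal_pos.2 ht1).ne'
  obtain ⟨g, hg, hgr, hμg⟩ := exists_measurable_index_measure_preimage_eq (P.map X) hp hpsum
  have ht_le : ∀ k ∈ Finset.Icc 1 r, t 1 ≤ t k := fun k hk =>
    (strictMonoOn_Iic_of_lt_succ htmono).monotoneOn hr (Finset.mem_Icc.1 hk).2
      (Finset.mem_Icc.1 hk).1
  refine ⟨(t ∘ g) ∘ X, isStoppingTime_coe_of_measurable_of_le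
    ((measurable_from_nat.comp hg).comp hX) fun ω => ht_le _ (hgr _), ?_⟩
  rw [← Measure.map_map (measurable_from_nat.comp hg) hXm]
  exact map_comp_eq_atomicLaw hg hgr hμg t

/-- there exists an `𝔽`-stopping time (finite-valued, being `ℝ`-valued)
whose law is `μ = ∑_{k=1}^r p_k δ_{t_k}`. -/
theorem exists_stopping_time_with_atomic_law
    {Ω : Type*} {m : MeasurableSpace Ω} (P : Measure Ω) [IsProbabilityMeasure P]
    (W : ℝ → Ω → ℝ) (ℱ : Filtration ℝ m)
    -- `W` is a standard Brownian motion: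
    (hWmeas : ∀ s : ℝ, Measurable (W s))
    (hW0 : ∀ᵐ ω ∂P, W 0 ω = 0)
    (hWcont : ∀ᵐ ω ∂P, Continuous fun s => W s ω)
    (hWindep : ∀ s u : ℝ, 0 ≤ s → s ≤ u →
      Indep (MeasurableSpace.comap (fun ω => W u ω - W s ω) (borel ℝ))
        (⨆ v ∈ Set.Icc (0:ℝ) s, MeasurableSpace.comap (W v) (borel ℝ)) P)
    (hWlaw : ∀ s u : ℝ, 0 ≤ s → s ≤ u →
      Measure.map (fun ω => W u ω - W s ω) P = gaussianReal 0 (Real.toNNReal (u - s)))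
    -- `ℱ` is the natural filtration of `W` augmented by the `P`-null sets:
    (hWadapted : ∀ s : ℝ, 0 ≤ s → StronglyMeasurable[ℱ s] (W s))
    (hℱindep : ∀ s u : ℝ, 0 ≤ s → s ≤ u →
      Indep (MeasurableSpace.comap (fun ω => W u ω - W s ω) (borel ℝ)) (ℱ s) P)
    (hNull : ∀ s : ℝ, ∀ N : Set Ω, MeasurableSet N → P N = 0 → MeasurableSet[ℱ s] N)
    -- times and weights:
    (r : ℕ) (hr : 1 ≤ r) (t : ℕ → ℝ) (ht0 : t 0 = 0)
    (htmono : ∀ k, k < r → t k < t (k + 1))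
    (p : ℕ → ℝ) (hp : ∀ k ∈ Finset.Icc 1 r, 0 < p k)
    (hpsum : ∑ k ∈ Finset.Icc 1 r, p k = 1) :
    ∃ τ : Ω → ℝ, IsStoppingTime ℱ (fun ω => (τ ω : WithTop ℝ)) ∧ Measure.map τ P = atomicLaw r t p :=
  exists_stopping_time_with_atomic_law_general P W ℱ hWlaw hWadapted r hr t ht0 htmono p hp hpsum

end
end

section
/- Let p, p' ∈ [0,1]^r satisfy p_1 + ⋯ + p_r = 1 and p'_1 + ⋯ + p'_r = 1. For every 𝔽-stopping time τ whose law equals Σ_{k=1}^r p_k δ_{t_k}, there exists an 𝔽-stopping time τ' whose law equals Σ_{k=1}^r p'_k δ_{t_k} and which satisfies ℙ[τ ≠ τ'] ≤ 4^r · ‖p − p'‖_{ℓ¹}, where ‖p − p'‖_{ℓ¹} = Σ_{k=1}^r |p_k − p'_k|. -/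
/-!
`W (t 1)` is `ℱ (t 1)`-measurable with an atomless Gaussian law, so its level sets cut any event
into a piece of any prescribed smaller mass, and they are available at every time `t k`.
Build `τ'` greedily: at step `k`, with `R` the event not yet assigned and `T = {τ = t k}`, choose
`D ⊆ R` of mass `p' k` that is contained in `R ∩ T` or contains it, and put `τ' = t k` on `D`.
The part of `T` outside `R` was assigned earlier to a wrong value, so the new mismatch
`P (D \ T) = (p' k - P (R ∩ T))⁺` is at most `(p' k - p k)⁺` plus all earlier mismatches; the
total mismatch therefore at most doubles at each step, giving `P (τ ≠ τ') ≤ 2 ^ r ‖p - p'‖₁`.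
-/

open MeasureTheory ProbabilityTheory Set

noncomputable section

open Filter Topology
open scoped ENNReal

theorem continuous_measureReal_Iic (ν : Measure ℝ) [IsFiniteMeasure ν] [NullSingletonClass ν] :
    Continuous fun x => ν.real (Iic x) := by
  refine continuous_iff_continuousAt.2 fun b => ?_
  have hIcc : Tendsto (fun δ => ν.real (Icc (b - δ) (b + δ))) (𝓝 0) (𝓝 0) :=
    (ENNReal.tendsto_toReal ENNReal.zero_ne_top).comp (tendsto_measure_Icc ν b)
  have hdist : Tendsto (fun x => |x - b|) (𝓝 b) (𝓝 0) := by
    simpa using (continuous_id.sub continuous_const).abs.tendsto (f := fun x => |x - b|) b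
  refine tendsto_iff_dist_tendsto_zero.2 (squeeze_zero (fun _ => dist_nonneg)
    (fun x => ?_) (hIcc.comp hdist))
  rw [Real.dist_eq, Function.comp_apply]
  rcases le_total x b with hxb | hbx
  · rw [abs_sub_comm, abs_of_nonneg (sub_nonneg.2 (measureReal_mono (Iic_subset_Iic.2 hxb))),
      ← measureReal_sdiff (Iic_subset_Iic.2 hxb) measurableSet_Iic, abs_of_nonpos (by linarith)]
    exact measureReal_mono fun y ⟨hyb, hyx⟩ => ⟨by simp at hyx; linarith, by simp at hyb; linarith⟩
  · rw [abs_of_nonneg (sub_nonneg.2 (measureReal_mono (Iic_subset_Iic.2 hbx))),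
      ← measureReal_sdiff (Iic_subset_Iic.2 hbx) measurableSet_Iic, abs_of_nonneg (by linarith)]
    exact measureReal_mono fun y ⟨hyx, hyb⟩ => ⟨by simp at hyb; linarith, by simp at hyx; linarith⟩

section

variable {Ω : Type*} {m : MeasurableSpace Ω}

def SplitsMeasure (m₀ : MeasurableSpace Ω) (μ : Measure[m] Ω) : Prop :=
  ∀ (B : Set Ω) (w : ℝ≥0∞), w ≤ μ B → ∃ C, MeasurableSet[m₀] C ∧ μ (B ∩ C) = w

theorem SplitsMeasure.mono {m₀ m₁ : MeasurableSpace Ω} {μ : Measure[m] Ω}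
    (h : SplitsMeasure m₀ μ) (hle : m₀ ≤ m₁) : SplitsMeasure m₁ μ := fun B w hw =>
  let ⟨C, hC, hμC⟩ := h B w hw
  ⟨C, hle C hC, hμC⟩

theorem splitsMeasure_comap (μ : Measure Ω) [IsFiniteMeasure μ] {X : Ω → ℝ} (hX : Measurable X)
    (hatom : ∀ c, μ (X ⁻¹' {c}) = 0) : SplitsMeasure (MeasurableSpace.comap X inferInstance) μ := by
  intro B w hw
  rcases eq_or_ne w 0 with rfl | hw0
  · exact ⟨∅, ⟨∅, MeasurableSet.empty, preimage_empty⟩, by simp⟩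
  rcases eq_or_ne w (μ B) with rfl | hwB
  · exact ⟨univ, ⟨univ, MeasurableSet.univ, preimage_univ⟩, by simp⟩
  set ν := (μ.restrict B).map X
  have hν : ∀ s, MeasurableSet s → ν s = μ (B ∩ X ⁻¹' s) := fun s hs => by
    rw [Measure.map_apply hX hs, Measure.restrict_apply (hX hs), inter_comm]
  have : NullSingletonClass ν := ⟨fun c => by
    rw [hν _ (measurableSet_singleton c)]; exact measure_mono_null inter_subset_right (hatom c)⟩
  have hbot : Tendsto (fun x => ν (Iic x)) atBot (𝓝 0) := by
    have := tendsto_measure_iInter_atBot (μ := ν) (fun x => measurableSet_Iic.nullMeasurableSet)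
      (monotone_Iic (α := ℝ)) ⟨0, measure_ne_top ν _⟩
    rwa [iInter_Iic_eq_empty_iff.2 (by simp), measure_empty] at this
  have htop : Tendsto (fun x => ν (Iic x)) atTop (𝓝 (μ B)) := by
    simpa [hν _ MeasurableSet.univ] using tendsto_measure_Iic_atTop ν
  have hwtop : w ≠ ∞ := ne_top_of_le_ne_top (measure_ne_top μ B) hw
  obtain ⟨a, ha⟩ := (hbot.eventually_le_const (pos_iff_ne_zero.2 hw0)).exists
  obtain ⟨b, hb⟩ := (htop.eventually_const_le (lt_of_le_of_ne hw hwB)).exists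
  obtain ⟨c, hc⟩ := mem_range_of_exists_le_of_exists_ge (continuous_measureReal_Iic ν)
    ⟨a, ENNReal.toReal_mono hwtop ha⟩ ⟨b, ENNReal.toReal_mono (measure_ne_top ν _) hb⟩
  refine ⟨X ⁻¹' Iic c, ⟨Iic c, measurableSet_Iic, rfl⟩, ?_⟩
  rwa [← hν _ measurableSet_Iic, ← ENNReal.toReal_eq_toReal_iff' (measure_ne_top ν _) hwtop]

theorem SplitsMeasure.exists_subset_measure_eq {G : MeasurableSpace Ω} {μ : Measure[m] Ω}
    (hsplit : SplitsMeasure G μ) (hG : G ≤ m) {R T : Set Ω} (hR : MeasurableSet[G] R)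
    (hT : MeasurableSet[G] T) {v : ℝ≥0∞} (hv : v ≤ μ R) :
    ∃ D, MeasurableSet[G] D ∧ D ⊆ R ∧ μ D = v ∧ μ (D \ T) = v - μ (R ∩ T) := by
  rcases le_or_gt v (μ (R ∩ T)) with hvA | hvA
  · obtain ⟨C, hC, hμC⟩ := hsplit (R ∩ T) v hvA
    refine ⟨R ∩ T ∩ C, (hR.inter hT).inter hC, inter_subset_left.trans inter_subset_left, hμC, ?_⟩
    rw [tsub_eq_zero_of_le hvA, sdiff_eq_empty.2 (inter_subset_left.trans inter_subset_right),
      measure_empty]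
  · have hvB : v - μ (R ∩ T) ≤ μ (R \ T) := by
      rwa [tsub_le_iff_left, measure_inter_add_sdiff R (hG _ hT)]
    obtain ⟨C, hC, hμC⟩ := hsplit (R \ T) _ hvB
    have hdiff : (R ∩ T ∪ R \ T ∩ C) \ T = R \ T ∩ C := by
      ext ω; simp only [Set.mem_sdiff, mem_union, mem_inter_iff]; tauto
    refine ⟨R ∩ T ∪ R \ T ∩ C, (hR.inter hT).union ((hR.diff hT).inter hC),
      union_subset inter_subset_left (inter_subset_left.trans sdiff_subset), ?_, by rw [hdiff, hμC]⟩
    rw [measure_union (disjoint_sdiff_inter.symm.mono_right inter_subset_left)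
      (hG _ ((hR.diff hT).inter hC)), hμC, add_tsub_cancel_of_le hvA.le]

theorem setOf_piecewise_const_eq_of_ne {L : Ω → ℕ} {D : Set Ω} [DecidablePred (· ∈ D)] {j k : ℕ}
    (hk : k ≠ j) : {ω | D.piecewise (fun _ => j) L ω = k} = {ω | L ω = k} \ D := by
  ext ω
  by_cases hω : ω ∈ D <;> simp [hω, Ne.symm hk]

theorem setOf_piecewise_const_eq_self {L : Ω → ℕ} {D : Set Ω} [DecidablePred (· ∈ D)] {j : ℕ}
    (hL : ∀ ω, L ω ≠ j) : {ω | D.piecewise (fun _ => j) L ω = j} = D := by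
  ext ω
  by_cases hω : ω ∈ D <;> simp [hω, hL]

theorem ENNReal.add_add_le_two_pow_succ_mul {S a d : ℝ≥0∞} {n : ℕ} (hS : S ≤ 2 ^ n * a) :
    S + (d + S) ≤ 2 ^ (n + 1) * (a + d) :=
  calc S + (d + S) = 2 * S + d := by ring
    _ ≤ 2 * (2 ^ n * a) + 2 ^ (n + 1) * d := by
      gcongr
      exact le_mul_of_one_le_left' (one_le_pow₀ one_le_two)
    _ = 2 ^ (n + 1) * (a + d) := by ring

/-- Label `0` marks the points not yet assigned; the points labelled `k ≥ 1` will be sent to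
`t k`. -/
structure IsPartialLabelling (μ : Measure Ω) (ℱ : Filtration ℝ m) (t : ℕ → ℝ) (τ : Ω → ℝ)
    (q q' : ℕ → ℝ≥0∞) (n : ℕ) (L : Ω → ℕ) : Prop where
  le : ∀ ω, L ω ≤ n
  measurableSet_eq_zero : MeasurableSet[ℱ (t n)] {ω | L ω = 0}
  measurableSet_eq : ∀ k ∈ Finset.Icc 1 n, MeasurableSet[ℱ (t k)] {ω | L ω = k}
  measure_eq : ∀ k ∈ Finset.Icc 1 n, μ {ω | L ω = k} = q' k
  measure_ne_le : μ {ω | L ω ≠ 0 ∧ τ ω ≠ t (L ω)} ≤ 2 ^ n * ∑ k ∈ Finset.Icc 1 n, (q' k - q k)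

namespace IsPartialLabelling

variable {μ : Measure Ω} {ℱ : Filtration ℝ m} {t : ℕ → ℝ} {τ : Ω → ℝ} {q q' : ℕ → ℝ≥0∞}
  {n r : ℕ} {L : Ω → ℕ}

theorem zero : IsPartialLabelling μ ℱ t τ q q' 0 fun _ => 0 where
  le _ := le_rfl
  measurableSet_eq_zero := by simp
  measurableSet_eq := by simp
  measure_eq := by simp
  measure_ne_le := by simp

theorem measure_eq_zero_add_sum (hL : IsPartialLabelling μ ℱ t τ q q' n L) :
    μ {ω | L ω = 0} + ∑ k ∈ Finset.Icc 1 n, q' k = μ univ := by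
  have hfib : ∀ k ∈ Finset.Icc 1 n, MeasurableSet (L ⁻¹' {k}) :=
    fun k hk => ℱ.le _ _ (hL.measurableSet_eq k hk)
  have hcompl : L ⁻¹' ↑(Finset.Icc 1 n) = {ω | L ω = 0}ᶜ := by
    ext ω; have := hL.le ω; simp; omega
  have hsum : ∑ k ∈ Finset.Icc 1 n, μ {ω | L ω = k} = μ (L ⁻¹' ↑(Finset.Icc 1 n)) :=
    sum_measure_preimage_singleton _ hfib
  rw [← Finset.sum_congr rfl hL.measure_eq, hsum, hcompl,
    measure_add_measure_compl (ℱ.le _ _ hL.measurableSet_eq_zero)]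

theorem le_measure_eq_zero [IsFiniteMeasure μ] (hL : IsPartialLabelling μ ℱ t τ q q' n L)
    (hq' : ∑ k ∈ Finset.Icc 1 r, q' k = μ univ) (hn : n + 1 ≤ r) :
    q' (n + 1) ≤ μ {ω | L ω = 0} := by
  have h := hL.measure_eq_zero_add_sum
  have hfin : ∑ k ∈ Finset.Icc 1 n, q' k ≠ ∞ :=
    ne_top_of_le_ne_top (measure_ne_top μ univ) (h ▸ le_add_self)
  refine (ENNReal.add_le_add_iff_right hfin).1 ?_
  rw [h, ← hq', add_comm, ← Finset.sum_Icc_succ_top (by omega)]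
  exact Finset.sum_le_sum_of_subset (Finset.Icc_subset_Icc_right hn)

theorem measure_eq_zero_eq_zero [IsFiniteMeasure μ] (hL : IsPartialLabelling μ ℱ t τ q q' r L)
    (hq' : ∑ k ∈ Finset.Icc 1 r, q' k = μ univ) : μ {ω | L ω = 0} = 0 := by
  have h := hL.measure_eq_zero_add_sum
  rw [← hq'] at h
  exact (ENNReal.add_left_inj (hq' ▸ measure_ne_top μ univ)).1 (h.trans (zero_add _).symm)

/-- The points of `{τ = t (n + 1)}` that are already labelled are mismatched. -/
theorem tsub_measure_inter_le (hL : IsPartialLabelling μ ℱ t τ q q' n L)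
    (ht : StrictMonoOn t (Iic r)) (hq : ∀ k ∈ Finset.Icc 1 r, q k ≤ μ {ω | τ ω = t k})
    (hn : n + 1 ≤ r) :
    q (n + 1) - μ ({ω | L ω = 0} ∩ {ω | τ ω = t (n + 1)}) ≤
      μ {ω | L ω ≠ 0 ∧ τ ω ≠ t (L ω)} := by
  have hsub : {ω | τ ω = t (n + 1)} \ {ω | L ω = 0} ⊆ {ω | L ω ≠ 0 ∧ τ ω ≠ t (L ω)} := by
    rintro ω ⟨hτω, hL0⟩
    refine ⟨hL0, fun h => ?_⟩
    have hLn := hL.le ω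
    have := ht.injOn (mem_Iic.2 (by omega)) (mem_Iic.2 hn) (h.symm.trans hτω)
    omega
  rw [tsub_le_iff_left, inter_comm]
  calc q (n + 1) ≤ μ {ω | τ ω = t (n + 1)} := hq (n + 1) (by simp; omega)
    _ ≤ _ := measure_le_inter_add_sdiff μ _ _
    _ ≤ _ := add_le_add_right (measure_mono hsub) _

theorem succ [IsFiniteMeasure μ] (hsplit : SplitsMeasure (ℱ (t 1)) μ)
    (ht : StrictMonoOn t (Iic r)) (hτ : IsStoppingTime ℱ fun ω => (τ ω : WithTop ℝ))
    (hq : ∀ k ∈ Finset.Icc 1 r, q k ≤ μ {ω | τ ω = t k})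
    (hq' : ∑ k ∈ Finset.Icc 1 r, q' k = μ univ) (hn : n + 1 ≤ r)
    (hL : IsPartialLabelling μ ℱ t τ q q' n L) :
    ∃ L', IsPartialLabelling μ ℱ t τ q q' (n + 1) L' := by
  classical
  have hℱ : ∀ i j, i ≤ j → j ≤ r → ℱ (t i) ≤ ℱ (t j) := fun i j hij hj =>
    ℱ.mono (ht.monotoneOn (hij.trans hj) hj hij)
  have hT : MeasurableSet[ℱ (t (n + 1))] {ω | τ ω = t (n + 1)} := by
    simpa only [WithTop.coe_inj] using hτ.measurableSet_eq (t (n + 1))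
  obtain ⟨D, hD, hDL, hμD, hμDT⟩ :=
    (hsplit.mono (hℱ 1 (n + 1) (by omega) hn)).exists_subset_measure_eq (ℱ.le _)
      (hℱ n (n + 1) (by omega) hn _ hL.measurableSet_eq_zero) hT (hL.le_measure_eq_zero hq' hn)
  have hLD : ∀ k ∈ Finset.Icc 1 n, {ω | L ω = k} \ D = {ω | L ω = k} := fun k hk =>
    sdiff_eq_left.2 <| disjoint_left.2 fun ω (hωk : L ω = k) hωD => by
      have : L ω = 0 := hDL hωD
      simp only [Finset.mem_Icc] at hk
      omega
  have hL_ne : ∀ ω, L ω ≠ n + 1 := fun ω => ((hL.le ω).trans_lt n.lt_succ_self).ne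
  have hcases : ∀ k ∈ Finset.Icc 1 (n + 1), k = n + 1 ∨ k ∈ Finset.Icc 1 n := by
    intro k hk
    simp only [Finset.mem_Icc] at hk ⊢
    omega
  refine ⟨D.piecewise (fun _ => n + 1) L, ⟨fun ω => ?_, ?_, fun k hk => ?_, fun k hk => ?_, ?_⟩⟩
  · by_cases hω : ω ∈ D <;> simp [hω, (hL.le ω).trans n.le_succ]
  · rw [setOf_piecewise_const_eq_of_ne (by omega)]
    exact (hℱ n (n + 1) (by omega) hn _ hL.measurableSet_eq_zero).diff hD
  · rcases hcases k hk with rfl | hk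
    · rwa [setOf_piecewise_const_eq_self hL_ne]
    · rw [setOf_piecewise_const_eq_of_ne (by simp at hk; omega), hLD k hk]
      exact hL.measurableSet_eq k hk
  · rcases hcases k hk with rfl | hk
    · rw [setOf_piecewise_const_eq_self hL_ne, hμD]
    · rw [setOf_piecewise_const_eq_of_ne (by simp at hk; omega), hLD k hk, hL.measure_eq k hk]
  · have hbad : {ω | D.piecewise (fun _ => n + 1) L ω ≠ 0 ∧
          τ ω ≠ t (D.piecewise (fun _ => n + 1) L ω)} ⊆
        {ω | L ω ≠ 0 ∧ τ ω ≠ t (L ω)} ∪ D \ {ω | τ ω = t (n + 1)} := by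
      intro ω hω
      by_cases hωD : ω ∈ D
      · exact Or.inr ⟨hωD, by simpa [hωD] using hω.2⟩
      · exact Or.inl (by simpa [hωD] using hω)
    set S := μ {ω | L ω ≠ 0 ∧ τ ω ≠ t (L ω)}
    calc _ ≤ S + μ (D \ {ω | τ ω = t (n + 1)}) := (measure_mono hbad).trans (measure_union_le _ _)
      _ ≤ S + ((q' (n + 1) - q (n + 1)) + S) := by
        rw [hμDT]
        gcongr
        exact tsub_le_tsub_add_tsub.trans (by gcongr; exact hL.tsub_measure_inter_le ht hq hn)
      _ ≤ _ := ENNReal.add_add_le_two_pow_succ_mul hL.measure_ne_le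
      _ = _ := by rw [Finset.sum_Icc_succ_top (by omega)]

theorem exists_of_le [IsFiniteMeasure μ] (hsplit : SplitsMeasure (ℱ (t 1)) μ)
    (ht : StrictMonoOn t (Iic r)) (hτ : IsStoppingTime ℱ fun ω => (τ ω : WithTop ℝ))
    (hq : ∀ k ∈ Finset.Icc 1 r, q k ≤ μ {ω | τ ω = t k})
    (hq' : ∑ k ∈ Finset.Icc 1 r, q' k = μ univ) :
    ∀ n ≤ r, ∃ L, IsPartialLabelling μ ℱ t τ q q' n L
  | 0, _ => ⟨_, zero⟩
  | n + 1, hn =>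
    let ⟨_, hL⟩ := exists_of_le hsplit ht hτ hq hq' n (by omega)
    hL.succ hsplit ht hτ hq hq' hn

theorem ae_mem_Icc [IsFiniteMeasure μ] (hL : IsPartialLabelling μ ℱ t τ q q' r L)
    (hq' : ∑ k ∈ Finset.Icc 1 r, q' k = μ univ) : ∀ᵐ ω ∂μ, L ω ∈ Finset.Icc 1 r := by
  filter_upwards [measure_eq_zero_iff_ae_notMem.1 (hL.measure_eq_zero_eq_zero hq')] with ω hω
  have := hL.le ω
  simp only [Finset.mem_Icc] at hω ⊢
  omega

theorem measurableSet_eq_of_null [IsFiniteMeasure μ] (hL : IsPartialLabelling μ ℱ t τ q q' r L)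
    (hq' : ∑ k ∈ Finset.Icc 1 r, q' k = μ univ)
    (hnull : ∀ N, MeasurableSet N → μ N = 0 → MeasurableSet[ℱ (t 0)] N) (k : ℕ) :
    MeasurableSet[ℱ (t k)] {ω | L ω = k} := by
  rcases Nat.eq_zero_or_pos k with rfl | hk
  · exact hnull _ (ℱ.le _ _ hL.measurableSet_eq_zero) (hL.measure_eq_zero_eq_zero hq')
  by_cases hkr : k ≤ r
  · exact hL.measurableSet_eq k (Finset.mem_Icc.2 ⟨hk, hkr⟩)
  · convert MeasurableSet.empty
    ext ω
    simp only [mem_ofPred_eq, mem_empty_iff_false, iff_false]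
    have := hL.le ω
    omega

theorem measure_ne_comp_le [IsFiniteMeasure μ] (hL : IsPartialLabelling μ ℱ t τ q q' r L)
    (hq' : ∑ k ∈ Finset.Icc 1 r, q' k = μ univ) :
    μ {ω | τ ω ≠ t (L ω)} ≤ 2 ^ r * ∑ k ∈ Finset.Icc 1 r, (q' k - q k) :=
  calc μ {ω | τ ω ≠ t (L ω)}
      ≤ μ ({ω | L ω ≠ 0 ∧ τ ω ≠ t (L ω)} ∪ {ω | L ω = 0}) := measure_mono fun ω hω => by
        by_cases h : L ω = 0
        · exact Or.inr h
        · exact Or.inl ⟨h, hω⟩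
    _ ≤ μ {ω | L ω ≠ 0 ∧ τ ω ≠ t (L ω)} + μ {ω | L ω = 0} := measure_union_le _ _
    _ ≤ _ := by
      rw [hL.measure_eq_zero_eq_zero hq', add_zero]
      exact hL.measure_ne_le

end IsPartialLabelling

theorem isStoppingTime_comp_of_measurableSet_eq {ι : Type*} [Preorder ι] {ℱ : Filtration ι m}
    {t : ℕ → ι} {L : Ω → ℕ} (hL : ∀ k, MeasurableSet[ℱ (t k)] {ω | L ω = k}) :
    IsStoppingTime ℱ fun ω => (t (L ω) : WithTop ι) := by
  intro i
  have : {ω | (t (L ω) : WithTop ι) ≤ i} = ⋃ k, ⋃ (_ : t k ≤ i), {ω | L ω = k} := by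
    ext ω
    simp
  rw [this]
  exact MeasurableSet.iUnion fun k => MeasurableSet.iUnion fun hk => ℱ.mono hk _ (hL k)

theorem map_comp_eq_atomicLaw_s3 {μ : Measure Ω} {L : Ω → ℕ} {r : ℕ} {t p : ℕ → ℝ}
    (hL : Measurable L) (hLr : ∀ᵐ ω ∂μ, L ω ∈ Finset.Icc 1 r)
    (hμL : ∀ k ∈ Finset.Icc 1 r, μ {ω | L ω = k} = ENNReal.ofReal (p k)) :
    μ.map (fun ω => t (L ω)) = atomicLaw r t p := by
  change μ.map (t ∘ L) = _
  rw [← Measure.map_map measurable_from_nat hL,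
    (Measure.ae_mem_finset_iff_map_eq_sum_dirac hL.aemeasurable).1 hLr,
    Measure.map_finset_sum measurable_from_nat.aemeasurable, atomicLaw]
  refine Finset.sum_congr rfl fun k hk => ?_
  rw [Measure.map_smul, Measure.map_dirac' measurable_from_nat]
  exact congrArg (· • _) (hμL k hk)

theorem ofReal_le_atomicLaw_singleton {r k : ℕ} {t p : ℕ → ℝ} (hk : k ∈ Finset.Icc 1 r) :
    ENNReal.ofReal (p k) ≤ atomicLaw r t p {t k} := by
  rw [atomicLaw, Measure.finsetSum_apply]
  calc ENNReal.ofReal (p k) = (ENNReal.ofReal (p k) • Measure.dirac (t k)) {t k} := by simp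
    _ ≤ _ := Finset.single_le_sum (f := fun j => (ENNReal.ofReal (p j) • Measure.dirac (t j)) {t k})
      (fun _ _ => bot_le) hk

theorem sum_ofReal_sub_le_ofReal_sum_abs {s : Finset ℕ} {p p' : ℕ → ℝ} (hp : ∀ k ∈ s, 0 ≤ p k) :
    ∑ k ∈ s, (ENNReal.ofReal (p' k) - ENNReal.ofReal (p k)) ≤
      ENNReal.ofReal (∑ k ∈ s, |p k - p' k|) := by
  rw [ENNReal.ofReal_sum_of_nonneg fun _ _ => abs_nonneg _]
  refine Finset.sum_le_sum fun k hk => ?_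
  rw [← ENNReal.ofReal_sub _ (hp k hk), abs_sub_comm]
  exact ENNReal.ofReal_le_ofReal (le_abs_self _)

theorem exists_isStoppingTime_map_eq_atomicLaw (μ : Measure Ω) [IsProbabilityMeasure μ]
    (ℱ : Filtration ℝ m) {r : ℕ} {t : ℕ → ℝ} (ht : StrictMonoOn t (Iic r))
    (hsplit : SplitsMeasure (ℱ (t 1)) μ)
    (hnull : ∀ N, MeasurableSet N → μ N = 0 → MeasurableSet[ℱ (t 0)] N)
    {p p' : ℕ → ℝ} (hp : ∀ k ∈ Finset.Icc 1 r, 0 ≤ p k) (hp' : ∀ k ∈ Finset.Icc 1 r, 0 ≤ p' k)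
    (hp'sum : ∑ k ∈ Finset.Icc 1 r, p' k = 1)
    {τ : Ω → ℝ} (hτ : IsStoppingTime ℱ fun ω => (τ ω : WithTop ℝ))
    (hτlaw : μ.map τ = atomicLaw r t p) :
    ∃ τ' : Ω → ℝ, IsStoppingTime ℱ (fun ω => (τ' ω : WithTop ℝ)) ∧
      μ.map τ' = atomicLaw r t p' ∧
      μ {ω | τ ω ≠ τ' ω} ≤ ENNReal.ofReal (2 ^ r * ∑ k ∈ Finset.Icc 1 r, |p k - p' k|) := by
  have hτm : Measurable τ := measurable_of_Iic fun c =>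
    ℱ.le c _ (by simpa only [WithTop.coe_le_coe] using hτ c : MeasurableSet[ℱ c] {ω | τ ω ≤ c})
  have hq : ∀ k ∈ Finset.Icc 1 r, ENNReal.ofReal (p k) ≤ μ {ω | τ ω = t k} := fun k hk => by
    have := ofReal_le_atomicLaw_singleton (t := t) (p := p) hk
    rwa [← hτlaw, Measure.map_apply hτm (measurableSet_singleton _)] at this
  have hq' : ∑ k ∈ Finset.Icc 1 r, ENNReal.ofReal (p' k) = μ univ := by
    rw [← ENNReal.ofReal_sum_of_nonneg hp', hp'sum, ENNReal.ofReal_one, measure_univ]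
  obtain ⟨L, hL⟩ := IsPartialLabelling.exists_of_le hsplit ht hτ hq hq' r le_rfl
  have hLmeas := hL.measurableSet_eq_of_null hq' hnull
  -- `τ' = t 0` on the null set `{L = 0}` of points left unassigned
  refine ⟨fun ω => t (L ω), isStoppingTime_comp_of_measurableSet_eq hLmeas,
    map_comp_eq_atomicLaw_s3 (measurable_to_countable' fun k => ℱ.le _ _ (hLmeas k))
      (hL.ae_mem_Icc hq') hL.measure_eq, (hL.measure_ne_comp_le hq').trans ?_⟩
  rw [ENNReal.ofReal_mul (by positivity), ENNReal.ofReal_pow zero_le_two, ENNReal.ofReal_ofNat]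
  gcongr
  exact sum_ofReal_sub_le_ofReal_sum_abs hp

end

theorem stopping_time_approximation_general
    {Ω : Type*} {m : MeasurableSpace Ω} (P : Measure Ω) [IsProbabilityMeasure P]
    (W : ℝ → Ω → ℝ) (ℱ : Filtration ℝ m)
    -- `W` is a standard Brownian motion:
    (hW0 : ∀ᵐ ω ∂P, W 0 ω = 0)
    (hWlaw : ∀ s u : ℝ, 0 ≤ s → s ≤ u →
      Measure.map (fun ω => W u ω - W s ω) P = gaussianReal 0 (Real.toNNReal (u - s)))
    -- `ℱ` is the natural filtration of `W` augmented by the `P`-null sets: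
    (hWadapted : ∀ s : ℝ, 0 ≤ s → StronglyMeasurable[ℱ s] (W s))
    (hNull : ∀ s : ℝ, ∀ N : Set Ω, MeasurableSet N → P N = 0 → MeasurableSet[ℱ s] N)
    -- times and weights:
    (r : ℕ) (hr : 1 ≤ r) (t : ℕ → ℝ) (ht0 : t 0 = 0)
    (htmono : ∀ k, k < r → t k < t (k + 1))
    (p p' : ℕ → ℝ)
    (hp : ∀ k ∈ Finset.Icc 1 r, p k ∈ Set.Icc (0:ℝ) 1)
    (hp' : ∀ k ∈ Finset.Icc 1 r, p' k ∈ Set.Icc (0:ℝ) 1)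
    (hp'sum : ∑ k ∈ Finset.Icc 1 r, p' k = 1)
    (τ : Ω → ℝ) (hτ : IsStoppingTime ℱ (fun ω => (τ ω : WithTop ℝ)))
    (hτlaw : Measure.map τ P = atomicLaw r t p) :
    ∃ τ' : Ω → ℝ, IsStoppingTime ℱ (fun ω => (τ' ω : WithTop ℝ)) ∧ Measure.map τ' P = atomicLaw r t p' ∧
      P {ω | τ ω ≠ τ' ω} ≤
        ENNReal.ofReal (4 ^ r * ∑ k ∈ Finset.Icc 1 r, |p k - p' k|) := by
  have ht : StrictMonoOn t (Iic r) := strictMonoOn_Iic_of_lt_succ fun k hk => by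
    simpa using htmono k hk
  have ht1 : 0 < t 1 := ht0 ▸ ht (mem_Iic.2 (Nat.zero_le r)) (mem_Iic.2 hr) one_pos
  have hX : Measurable[ℱ (t 1)] (W (t 1)) := (hWadapted (t 1) ht1.le).measurable
  have hXm : Measurable (W (t 1)) := hX.mono (ℱ.le _) le_rfl
  have hXlaw : P.map (W (t 1)) = gaussianReal 0 (t 1).toNNReal := by
    rw [← sub_zero (t 1), ← hWlaw 0 (t 1) le_rfl ht1.le, sub_zero]
    exact Measure.map_congr (by filter_upwards [hW0] with ω hω; simp [hω])
  have hatom : ∀ c, P (W (t 1) ⁻¹' {c}) = 0 := fun c => by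
    have := nullSingletonClass_gaussianReal (μ := 0) (v := (t 1).toNNReal) (by simpa using ht1)
    rw [← Measure.map_apply hXm (measurableSet_singleton c), hXlaw,
      measure_singleton]
  have hsplit : SplitsMeasure (ℱ (t 1)) P :=
    (splitsMeasure_comap P hXm hatom).mono hX.comap_le
  obtain ⟨τ', hτ', hlaw, hne⟩ := exists_isStoppingTime_map_eq_atomicLaw P ℱ ht hsplit (hNull (t 0))
    (fun k hk => (hp k hk).1) (fun k hk => (hp' k hk).1) hp'sum hτ hτlaw
  refine ⟨τ', hτ', hlaw, hne.trans (ENNReal.ofReal_le_ofReal ?_)⟩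
  have : (0 : ℝ) ≤ ∑ k ∈ Finset.Icc 1 r, |p k - p' k| := Finset.sum_nonneg fun _ _ => abs_nonneg _
  gcongr
  norm_num

/-- given two probability vectors `p, p'`, any stopping time with law
`∑ p_k δ_{t_k}` can be approximated by a stopping time with law `∑ p'_k δ_{t_k}` such that
`P[τ ≠ τ'] ≤ 4^r ‖p - p'‖_{ℓ¹}`. -/
theorem stopping_time_approximation
    {Ω : Type*} {m : MeasurableSpace Ω} (P : Measure Ω) [IsProbabilityMeasure P]
    (W : ℝ → Ω → ℝ) (ℱ : Filtration ℝ m)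
    -- `W` is a standard Brownian motion:
    (hWmeas : ∀ s : ℝ, Measurable (W s))
    (hW0 : ∀ᵐ ω ∂P, W 0 ω = 0)
    (hWcont : ∀ᵐ ω ∂P, Continuous fun s => W s ω)
    (hWindep : ∀ s u : ℝ, 0 ≤ s → s ≤ u →
      Indep (MeasurableSpace.comap (fun ω => W u ω - W s ω) (borel ℝ))
        (⨆ v ∈ Set.Icc (0:ℝ) s, MeasurableSpace.comap (W v) (borel ℝ)) P)
    (hWlaw : ∀ s u : ℝ, 0 ≤ s → s ≤ u →
      Measure.map (fun ω => W u ω - W s ω) P = gaussianReal 0 (Real.toNNReal (u - s)))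
    -- `ℱ` is the natural filtration of `W` augmented by the `P`-null sets:
    (hWadapted : ∀ s : ℝ, 0 ≤ s → StronglyMeasurable[ℱ s] (W s))
    (hℱindep : ∀ s u : ℝ, 0 ≤ s → s ≤ u →
      Indep (MeasurableSpace.comap (fun ω => W u ω - W s ω) (borel ℝ)) (ℱ s) P)
    (hNull : ∀ s : ℝ, ∀ N : Set Ω, MeasurableSet N → P N = 0 → MeasurableSet[ℱ s] N)
    -- times and weights:
    (r : ℕ) (hr : 1 ≤ r) (t : ℕ → ℝ) (ht0 : t 0 = 0)
    (htmono : ∀ k, k < r → t k < t (k + 1))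
    (p p' : ℕ → ℝ)
    (hp : ∀ k ∈ Finset.Icc 1 r, p k ∈ Set.Icc (0:ℝ) 1)
    (hp' : ∀ k ∈ Finset.Icc 1 r, p' k ∈ Set.Icc (0:ℝ) 1)
    (hpsum : ∑ k ∈ Finset.Icc 1 r, p k = 1)
    (hp'sum : ∑ k ∈ Finset.Icc 1 r, p' k = 1)
    (τ : Ω → ℝ) (hτ : IsStoppingTime ℱ (fun ω => (τ ω : WithTop ℝ)))
    (hτlaw : Measure.map τ P = atomicLaw r t p) :
    ∃ τ' : Ω → ℝ, IsStoppingTime ℱ (fun ω => (τ' ω : WithTop ℝ)) ∧ Measure.map τ' P = atomicLaw r t p' ∧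
      P {ω | τ ω ≠ τ' ω} ≤
        ENNReal.ofReal (4 ^ r * ∑ k ∈ Finset.Icc 1 r, |p k - p' k|) :=
  stopping_time_approximation_general P W ℱ hW0 hWlaw hWadapted hNull r hr t ht0 htmono p p' hp hp'
    hp'sum τ hτ hτlaw

end
end

section
/- Fix k ∈ {1, …, r−1}. For all y, y' ∈ Δ_k with y_k < 1 and y'_k < 1, one has ‖P_k(y) − P_k(y')‖_{ℓ∞} ≤ (1/(1 − y_k) + 1/(1 − y'_k)) · ‖y − y'‖_{ℓ∞}. -/
open Set

noncomputable section

/-- The sets `Δ_k ⊂ ℝ^r` (vectors indexed by `{1, …, r}`, extended by zero elsewhere). -/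
def simplexSet (r k : ℕ) : Set (ℕ → ℝ) :=
  {y | (∀ l, y l ∈ Set.Icc (0:ℝ) 1) ∧ (∑ l ∈ Finset.Icc 1 r, y l = 1) ∧
    (∀ l, l < k → y l = 0) ∧ (∀ l, r < l → y l = 0)}

/-- The `k`-th standard basis vector `e_k` of `ℝ^r`. -/
def eVec (k : ℕ) : ℕ → ℝ := fun l => if l = k then 1 else 0

/-- The perspective map `P_k : Δ_k → Δ_k`. -/
def perspMap (r k : ℕ) (y : ℕ → ℝ) : ℕ → ℝ :=
  if y k = 1 then y
  else fun l => if k < l then (∑ j ∈ Finset.Icc (k + 1) r, y j)⁻¹ * y l else 0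

/-! On `Δ_k` the tail `y_{k+1} + ⋯ + y_r` equals `1 - y_k`, so for `y_k < 1` the perspective map
is `l ↦ y_l / (1 - y_k)` for `l > k` and `0` otherwise. The estimate is then an elementary bound
on `a / s - b / t` for `0 ≤ a ≤ s`, `0 ≤ b ≤ t` with `|a - b|, |s - t| ≤ M`: the decomposition
`a / s - b / t = (a - b) / s + (b / t) (t - s) / s` together with `b / t ≤ 1` gives `2M / s`,
symmetrically `2M / t`, and the mean of the two bounds is `(1 / s + 1 / t) M`. -/

theorem abs_div_sub_div_le {a b s t : ℝ} (hs : 0 < s) (ht : 0 < t) (hb : 0 ≤ b)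
    (hbt : b ≤ t) :
    |a / s - b / t| ≤ (|a - b| + |s - t|) / s := by
  have h_ratio : b / t ≤ 1 := div_le_one_of_le₀ hbt ht.le
  calc |a / s - b / t| = |(a - b) / s + b / t * ((t - s) / s)| := by
        congr 1; field_simp; ring
    _ ≤ |(a - b) / s| + |b / t * ((t - s) / s)| := abs_add_le _ _
    _ = |a - b| / s + b / t * (|s - t| / s) := by
        rw [abs_mul, abs_div (a - b), abs_div (t - s), abs_of_pos hs,
          abs_of_nonneg (div_nonneg hb ht.le), abs_sub_comm t]
    _ ≤ |a - b| / s + 1 * (|s - t| / s) := by gcongr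
    _ = (|a - b| + |s - t|) / s := by ring

theorem abs_div_sub_div_le_inv_add_inv_mul {a b s t M : ℝ} (hs : 0 < s) (ht : 0 < t)
    (ha : 0 ≤ a) (has : a ≤ s) (hb : 0 ≤ b) (hbt : b ≤ t)
    (hab : |a - b| ≤ M) (hst : |s - t| ≤ M) :
    |a / s - b / t| ≤ (1 / s + 1 / t) * M := by
  have h_s : |a / s - b / t| ≤ 2 * M / s := by
    grw [abs_div_sub_div_le hs ht hb hbt, hab, hst, two_mul]
  have h_t : |a / s - b / t| ≤ 2 * M / t := by
    have h := abs_div_sub_div_le (a := b) ht hs ha has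
    rw [abs_sub_comm, abs_sub_comm b, abs_sub_comm t] at h
    grw [h, hab, hst, two_mul]
  calc |a / s - b / t| ≤ (2 * M / s + 2 * M / t) / 2 := by linarith
    _ = (1 / s + 1 / t) * M := by ring

namespace simplexSet

variable {r k : ℕ} {y y' : ℕ → ℝ}

theorem sum_Icc_succ_eq_one_sub (hy : y ∈ simplexSet r k) (hk : 1 ≤ k) (hkr : k ≤ r) :
    ∑ j ∈ Finset.Icc (k + 1) r, y j = 1 - y k := by
  obtain ⟨-, hsum, hlt, -⟩ := hy
  have h_head : ∑ j ∈ Finset.Ioc 0 k, y j = y k :=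
    Finset.sum_eq_single_of_mem k (Finset.mem_Ioc.2 ⟨hk, le_rfl⟩)
      fun j hj hjk => hlt j (lt_of_le_of_ne (Finset.mem_Ioc.1 hj).2 hjk)
  have h_split := Finset.sum_Ioc_consecutive y (Nat.zero_le k) hkr
  rw [h_head, ← Finset.Icc_add_one_left_eq_Ioc, ← Finset.Icc_add_one_left_eq_Ioc, zero_add,
    hsum] at h_split
  linarith

theorem le_one_sub_of_lt {l : ℕ} (hy : y ∈ simplexSet r k) (hk : 1 ≤ k) (hkr : k ≤ r)
    (hkl : k < l) : y l ≤ 1 - y k := by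
  rcases le_or_gt l r with hlr | hrl
  · rw [← sum_Icc_succ_eq_one_sub hy hk hkr]
    exact Finset.single_le_sum (fun j _ => (hy.1 j).1) (Finset.mem_Icc.2 ⟨hkl, hlr⟩)
  · rw [hy.2.2.2 l hrl, sub_nonneg]
    exact (hy.1 k).2

theorem abs_sub_le_sup' (hy : y ∈ simplexSet r k) (hy' : y' ∈ simplexSet r k) (hk : 1 ≤ k)
    (hne : (Finset.Icc 1 r).Nonempty) (l : ℕ) :
    |y l - y' l| ≤ (Finset.Icc 1 r).sup' hne (fun j => |y j - y' j|) := by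
  by_cases hl : l ∈ Finset.Icc 1 r
  · exact Finset.le_sup' (fun j => |y j - y' j|) hl
  have h_vanish : ∀ z ∈ simplexSet r k, z l = 0 := by
    rintro z ⟨-, -, hlt, hgt⟩
    rcases Nat.lt_or_ge l 1 with hl1 | hl1
    · exact hlt l (hl1.trans_le hk)
    · simp only [Finset.mem_Icc, not_and, not_le] at hl
      exact hgt l (hl hl1)
  obtain ⟨j, hj⟩ := hne
  rw [h_vanish y hy, h_vanish y' hy', sub_self, abs_zero]
  exact (abs_nonneg _).trans (Finset.le_sup' (fun j => |y j - y' j|) hj)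

end simplexSet

theorem perspMap_apply_of_ne_one {r k : ℕ} {y : ℕ → ℝ} (hy : y ∈ simplexSet r k)
    (hk : 1 ≤ k) (hkr : k ≤ r) (hyk : y k ≠ 1) (l : ℕ) :
    perspMap r k y l = if k < l then y l / (1 - y k) else 0 := by
  rw [perspMap, if_neg hyk, simplexSet.sum_Icc_succ_eq_one_sub hy hk hkr, inv_mul_eq_div]

/-- the `ℓ∞` estimate
`‖P_k(y) - P_k(y')‖_∞ ≤ (1/(1-y_k) + 1/(1-y'_k)) ‖y - y'‖_∞` for `y, y' ∈ Δ_k` with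
`y_k < 1`, `y'_k < 1`. -/
theorem perspMap_linfty_estimate (r : ℕ) (hr : 1 ≤ r) (k : ℕ) (hk1 : 1 ≤ k) (hkr : k < r)
    (y y' : ℕ → ℝ) (hy : y ∈ simplexSet r k) (hy' : y' ∈ simplexSet r k)
    (hyk : y k < 1) (hy'k : y' k < 1) :
    ∀ l : ℕ, |perspMap r k y l - perspMap r k y' l| ≤
      (1 / (1 - y k) + 1 / (1 - y' k)) *
        (Finset.Icc 1 r).sup' (Finset.nonempty_Icc.mpr hr) (fun j => |y j - y' j|) := by
  intro l
  have hs : 0 < 1 - y k := sub_pos.2 hyk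
  have hs' : 0 < 1 - y' k := sub_pos.2 hy'k
  have hM := simplexSet.abs_sub_le_sup' hy hy' hk1 (Finset.nonempty_Icc.mpr hr)
  rw [perspMap_apply_of_ne_one hy hk1 hkr.le hyk.ne,
    perspMap_apply_of_ne_one hy' hk1 hkr.le hy'k.ne]
  split_ifs with hkl
  · refine abs_div_sub_div_le_inv_add_inv_mul hs hs' (hy.1 l).1
      (simplexSet.le_one_sub_of_lt hy hk1 hkr.le hkl) (hy'.1 l).1
      (simplexSet.le_one_sub_of_lt hy' hk1 hkr.le hkl) (hM l) ?_
    rw [sub_sub_sub_cancel_left, abs_sub_comm]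
    exact hM k
  · rw [sub_self, abs_zero]
    exact mul_nonneg (by positivity) ((abs_nonneg _).trans (hM 0))

end
end
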